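/- Strong duality for the relaxed problem: let h_ε = h̄ χ_{W_ε} minimize Iᶜ_ε over {h : 0 ≤ h ≤ h̄}, and define u_ε = (1/ε)(⟨h_ε⟩_x − f), v_ε = (1/ε)(⟨h_ε⟩_y − g), w_ε = min{c + u_ε + v_ε, 0}. Then Iᶜ_ε(h_ε) = Jᵉ(u_ε, v_ε, w_ε), where Jᵉ(u,v,w) = −∫uf − ∫vg + ∬ w h̄ − (ε/2)‖u‖²_{L²} − (ε/2)‖v‖²_{L²}; moreover (u_ε, v_ε, w_ε) maximizes Jᵉ over all triples with u + v − w + c ≥ 0 and w ≤ 0. -/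

import Mathlib

/-
Completing the square in the two penalty terms gives, for every admissible `h` and every triple
`(u, v, w)`, the exact identity
`Iᶜ_ε(h) - Jᵉ(u,v,w) = ∬ ((c + u + v) h - w h̄) + (1/2ε)‖⟨h⟩ₓ - f - εu‖² + (1/2ε)‖⟨h⟩_y - g - εv‖²`,
whose right-hand side is nonnegative when `u + v - w + c ≥ 0` and `w ≤ 0`: this is weak duality.
For `(u_ε, v_ε, w_ε)` the squares vanish, so it remains to see that the gap at `h_ε` is `≤ 0`.
The bang-bang competitor `h* = h̄ χ_{c + u_ε + v_ε < 0}` satisfies `(c + u_ε + v_ε) h* = w_ε h̄`,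
so along the segment `h_ε + t (h* - h_ε)` the gap equals `(1 - t)·gap + O(t²)`, and minimality
of `h_ε` forces `gap ≤ 0`.
-/

open MeasureTheory

/-- The relaxed (penalized) transport cost
`Iᶜ_ε(h) = ∬ c h + (1/(2ε))‖⟨h⟩ₓ − f‖²_{L²} + (1/(2ε))‖⟨h⟩_y − g‖²_{L²}`. -/
noncomputable def relaxedCost (m n : ℕ) (ε : ℝ)
    (c : (Fin m → ℝ) × (Fin n → ℝ) → ℝ)
    (f : (Fin m → ℝ) → ℝ) (g : (Fin n → ℝ) → ℝ)
    (h : (Fin m → ℝ) × (Fin n → ℝ) → ℝ) : ℝ :=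
  (∫ p, c p * h p)
    + (1 / (2 * ε)) * (∫ x, ((∫ y, h (x, y)) - f x) ^ 2)
    + (1 / (2 * ε)) * (∫ y, ((∫ x, h (x, y)) - g y) ^ 2)

/-- The relaxed dual functional
`Jᵉ(u,v,w) = −∫uf − ∫vg + ∬wh̄ − (ε/2)‖u‖²_{L²} − (ε/2)‖v‖²_{L²}`. -/
noncomputable def relaxedDual (m n : ℕ) (ε : ℝ)
    (hbar : (Fin m → ℝ) × (Fin n → ℝ) → ℝ)
    (f : (Fin m → ℝ) → ℝ) (g : (Fin n → ℝ) → ℝ)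
    (u : (Fin m → ℝ) → ℝ) (v : (Fin n → ℝ) → ℝ)
    (w : (Fin m → ℝ) × (Fin n → ℝ) → ℝ) : ℝ :=
  -(∫ x, u x * f x) - (∫ y, v y * g y) + (∫ p, w p * hbar p)
    - (ε / 2) * (∫ x, (u x) ^ 2) - (ε / 2) * (∫ y, (v y) ^ 2)

open Set Filter Function Topology
open scoped ENNReal

theorem nonpos_of_forall_le_one_sub_mul_add_sq_mul {D E : ℝ}
    (h : ∀ t : ℝ, 0 < t → t ≤ 1 → D ≤ (1 - t) * D + t ^ 2 * E) : D ≤ 0 := by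
  have hlim : Tendsto (fun t : ℝ => t * E) (𝓝[>] 0) (𝓝 0) := by
    simpa using (tendsto_id.mul_const E).mono_left (nhdsWithin_le_nhds (a := (0 : ℝ)))
  refine ge_of_tendsto hlim ?_
  filter_upwards [Ioo_mem_nhdsGT zero_lt_one] with t ht
  have := h t ht.1 ht.2.le
  exact le_of_mul_le_mul_left (by nlinarith) ht.1

theorem abs_le_indicator_of_support_subset {X : Type*} {φ : X → ℝ} {C : ℝ} {s : Set X}
    (hC : ∀ x, |φ x| ≤ C) (hsupp : support φ ⊆ s) (x : X) :
    |φ x| ≤ s.indicator (fun _ => C) x := by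
  by_cases hx : x ∈ s
  · simpa [hx] using hC x
  · simp [hx, notMem_support.1 (mt (@hsupp x) hx)]

theorem abs_le_and_support_subset_of_nonneg_of_le {X : Type*} {h H : X → ℝ} {C : ℝ}
    {s : Set X} (h0 : ∀ p, 0 ≤ h p) (hle : ∀ p, h p ≤ H p) (hC : ∀ p, H p ≤ C)
    (hsupp : support H ⊆ s) : (∀ p, |h p| ≤ C) ∧ support h ⊆ s :=
  ⟨fun p => (abs_of_nonneg (h0 p)).trans_le ((hle p).trans (hC p)),
    fun p hp => hsupp fun hH => hp (le_antisymm (hH ▸ hle p) (h0 p))⟩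

section Integrals

variable {α : Type*} [MeasurableSpace α] {μ : Measure α}

theorem memLp_of_abs_le_of_support_subset {φ : α → ℝ} {C : ℝ} {s : Set α}
    (hφ : AEStronglyMeasurable φ μ) (hC : ∀ x, |φ x| ≤ C) (hsupp : support φ ⊆ s)
    (hs : MeasurableSet s) (hμs : μ s ≠ ∞) (p : ℝ≥0∞) : MemLp φ p μ :=
  (memLp_indicator_const p hs C (Or.inr hμs)).mono hφ <| Eventually.of_forall fun x =>
    (abs_le_indicator_of_support_subset hC hsupp x).trans (le_abs_self _)

theorem MeasureTheory.IntegrableOn.integrable_mul_of_support_subset {c h : α → ℝ} {C : ℝ}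
    {s : Set α} (hc : IntegrableOn c s μ) (hh : AEStronglyMeasurable h μ) (hC : ∀ x, |h x| ≤ C)
    (hsupp : support h ⊆ s) : Integrable (fun x => c x * h x) μ :=
  IntegrableOn.integrable_of_forall_notMem_eq_zero
    (hc.mul_bdd hh.restrict (Eventually.of_forall hC)) fun x hx => by
      simp [notMem_support.1 (mt (@hsupp x) hx)]

theorem integral_completing_square {ε : ℝ} (hε : ε ≠ 0) {a f u : α → ℝ} (ha : MemLp a 2 μ)
    (hf : MemLp f 2 μ) (hu : MemLp u 2 μ) :
    1 / (2 * ε) * ∫ x, (a x - f x) ^ 2 ∂μ + ∫ x, u x * f x ∂μ + ε / 2 * ∫ x, u x ^ 2 ∂μ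
      = 1 / (2 * ε) * ∫ x, (a x - f x - ε * u x) ^ 2 ∂μ + ∫ x, u x * a x ∂μ := by
  have h1 : Integrable (fun x => (a x - f x) ^ 2) μ := (ha.sub hf).integrable_sq
  have h2 : Integrable (fun x => (a x - f x - ε * u x) ^ 2) μ :=
    ((ha.sub hf).sub (hu.const_mul ε)).integrable_sq
  have huf : Integrable (fun x => u x * f x) μ := hu.integrable_mul hf
  have hua : Integrable (fun x => u x * a x) μ := hu.integrable_mul ha
  calc _ = ∫ x, (1 / (2 * ε) * (a x - f x) ^ 2 + u x * f x + ε / 2 * u x ^ 2) ∂μ := by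
        rw [integral_add _ (hu.integrable_sq.const_mul _), integral_add (h1.const_mul _) huf,
          integral_const_mul, integral_const_mul]
        exact (h1.const_mul _).add huf
    _ = ∫ x, (1 / (2 * ε) * (a x - f x - ε * u x) ^ 2 + u x * a x) ∂μ := by
        congr 1 with x
        field_simp
        ring
    _ = _ := by rw [integral_add (h2.const_mul _) hua, integral_const_mul]

theorem integral_add_mul_sub {φ ψ : α → ℝ} (hφ : Integrable φ μ) (hψ : Integrable ψ μ) (t : ℝ) :
    ∫ x, (φ x + t * (ψ x - φ x)) ∂μ = ∫ x, φ x ∂μ + t * (∫ x, ψ x ∂μ - ∫ x, φ x ∂μ) := by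
  rw [integral_add hφ (by exact (hψ.sub hφ).const_mul t), integral_const_mul,
    integral_sub hψ hφ]

theorem exists_measurable_mul_ae_eq_min_zero_mul {φ hbar : α → ℝ} (hφ : AEStronglyMeasurable φ μ)
    (hbar_meas : Measurable hbar) (hbar_nonneg : ∀ x, 0 ≤ hbar x) :
    ∃ k : α → ℝ, Measurable k ∧ (∀ x, 0 ≤ k x ∧ k x ≤ hbar x) ∧
      ∀ᵐ x ∂μ, φ x * k x = min (φ x) 0 * hbar x := by
  set S := {x | hφ.mk φ x < 0}
  have hS : MeasurableSet S := measurableSet_lt hφ.stronglyMeasurable_mk.measurable measurable_const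
  refine ⟨S.indicator hbar, hbar_meas.indicator hS, fun x => ?_, ?_⟩
  · by_cases hx : x ∈ S <;> simp [hx, hbar_nonneg x]
  · filter_upwards [hφ.ae_eq_mk] with x hx
    rw [hx]
    by_cases hneg : hφ.mk φ x < 0
    · simp [S, hneg, hneg.le]
    · simp [S, hneg, not_lt.1 hneg]

end Integrals

section ProductSpace

variable {α β : Type*} [MeasurableSpace α] [MeasurableSpace β] {μ : Measure α} {ν : Measure β}
  {A : Set α} {B : Set β} {C : ℝ} {h : α × β → ℝ}

theorem integrable_prodMk_left_of_support_subset (hh : Measurable h) (hC : ∀ p, |h p| ≤ C)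
    (hsupp : support h ⊆ A ×ˢ B) (hB : MeasurableSet B) (hνB : ν B ≠ ∞) (x : α) :
    Integrable (fun y => h (x, y)) ν :=
  memLp_one_iff_integrable.1 <| memLp_of_abs_le_of_support_subset
    (hh.comp measurable_prodMk_left).aestronglyMeasurable (fun _ => hC _)
    (fun _ hy => (hsupp hy).2) hB hνB 1

theorem integrable_prodMk_right_of_support_subset (hh : Measurable h) (hC : ∀ p, |h p| ≤ C)
    (hsupp : support h ⊆ A ×ˢ B) (hA : MeasurableSet A) (hμA : μ A ≠ ∞) (y : β) :
    Integrable (fun x => h (x, y)) μ :=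
  integrable_prodMk_left_of_support_subset (h := h ∘ Prod.swap) (hh.comp measurable_swap)
    (fun _ => hC _) (fun _ hq => (hsupp hq).symm) hA hμA y

theorem memLp_two_integral_prod_right [SFinite ν] (hh : AEStronglyMeasurable h (μ.prod ν))
    (hC : ∀ p, |h p| ≤ C) (hsupp : support h ⊆ A ×ˢ B) (hA : MeasurableSet A) (hμA : μ A ≠ ∞)
    (hB : MeasurableSet B) (hνB : ν B ≠ ∞) :
    MemLp (fun x => ∫ y, h (x, y) ∂ν) 2 μ := by
  refine memLp_of_abs_le_of_support_subset hh.integral_prod_right' (C := C * ν.real B)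
    (fun x => ?_) (fun x hx => ?_) hA hμA 2
  · calc |∫ y, h (x, y) ∂ν| ≤ ∫ y, B.indicator (fun _ => C) y ∂ν :=
          (Real.norm_eq_abs _).symm.trans_le <| norm_integral_le_of_norm_le
            ((integrable_indicator_iff hB).2 (integrableOn_const hνB)) <| Eventually.of_forall <|
              abs_le_indicator_of_support_subset (φ := fun y => h (x, y)) (fun _ => hC _)
                fun _ hy => (hsupp hy).2
      _ = C * ν.real B := by rw [integral_indicator_const _ hB, smul_eq_mul, mul_comm]
  · by_contra hxA
    refine hx (integral_eq_zero_of_ae (Eventually.of_forall fun y => ?_))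
    exact notMem_support.1 fun hy => hxA (hsupp hy).1

theorem integrable_comp_fst_mul {F : α → ℝ} (hF : MemLp F 2 μ)
    (hh : AEStronglyMeasurable h (μ.prod ν)) (hC : ∀ p, |h p| ≤ C) (hsupp : support h ⊆ A ×ˢ B)
    (hA : MeasurableSet A) (hμA : μ A ≠ ∞) (hB : MeasurableSet B) (hνB : ν B ≠ ∞) :
    Integrable (fun p => F p.1 * h p) (μ.prod ν) := by
  have hFA : Integrable (fun x => F x * A.indicator (fun _ => (1 : ℝ)) x) μ :=
    hF.integrable_mul (memLp_indicator_const 2 hA 1 (Or.inr hμA))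
  have hB1 : Integrable (B.indicator fun _ => (1 : ℝ)) ν :=
    (integrable_indicator_iff hB).2 (integrableOn_const hνB)
  refine ((hFA.mul_prod hB1).mul_bdd hh (Eventually.of_forall hC)).congr
    (Eventually.of_forall fun p => ?_)
  by_cases hp : p ∈ A ×ˢ B
  · simp [indicator_of_mem hp.1, indicator_of_mem hp.2]
  · simp [notMem_support.1 (mt (@hsupp p) hp)]

section SFinite

variable [SFinite μ] [SFinite ν]

theorem memLp_two_integral_prod_left (hh : AEStronglyMeasurable h (μ.prod ν))
    (hC : ∀ p, |h p| ≤ C) (hsupp : support h ⊆ A ×ˢ B) (hA : MeasurableSet A) (hμA : μ A ≠ ∞)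
    (hB : MeasurableSet B) (hνB : ν B ≠ ∞) :
    MemLp (fun y => ∫ x, h (x, y) ∂μ) 2 ν :=
  memLp_two_integral_prod_right (h := h ∘ Prod.swap) hh.prod_swap (fun _ => hC _)
    (fun _ hq => (hsupp hq).symm) hB hνB hA hμA

theorem integrable_comp_snd_mul {G : β → ℝ} (hG : MemLp G 2 ν)
    (hh : AEStronglyMeasurable h (μ.prod ν)) (hC : ∀ p, |h p| ≤ C) (hsupp : support h ⊆ A ×ˢ B)
    (hA : MeasurableSet A) (hμA : μ A ≠ ∞) (hB : MeasurableSet B) (hνB : ν B ≠ ∞) :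
    Integrable (fun p => G p.2 * h p) (μ.prod ν) :=
  integrable_swap_iff.1 <| integrable_comp_fst_mul (h := h ∘ Prod.swap) hG hh.prod_swap
    (fun _ => hC _) (fun _ hq => (hsupp hq).symm) hB hνB hA hμA

theorem integral_comp_fst_mul {F : α → ℝ} (hint : Integrable (fun p => F p.1 * h p) (μ.prod ν)) :
    ∫ p, F p.1 * h p ∂(μ.prod ν) = ∫ x, F x * ∫ y, h (x, y) ∂ν ∂μ := by
  simp_rw [integral_prod _ hint, integral_const_mul]

theorem integral_comp_snd_mul {G : β → ℝ} (hint : Integrable (fun p => G p.2 * h p) (μ.prod ν)) :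
    ∫ p, G p.2 * h p ∂(μ.prod ν) = ∫ y, G y * ∫ x, h (x, y) ∂μ ∂ν := by
  simp_rw [integral_prod_symm _ hint, integral_const_mul]

theorem integrable_add_add_mul {c : α × β → ℝ} {u : α → ℝ} {v : β → ℝ}
    (hc : IntegrableOn c (A ×ˢ B) (μ.prod ν)) (hu : MemLp u 2 μ) (hv : MemLp v 2 ν)
    (hh : AEStronglyMeasurable h (μ.prod ν)) (hC : ∀ p, |h p| ≤ C) (hsupp : support h ⊆ A ×ˢ B)
    (hA : MeasurableSet A) (hμA : μ A ≠ ∞) (hB : MeasurableSet B) (hνB : ν B ≠ ∞) :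
    Integrable (fun p => (c p + u p.1 + v p.2) * h p) (μ.prod ν) := by
  simp_rw [add_mul]
  exact ((hc.integrable_mul_of_support_subset hh hC hsupp).add
    (integrable_comp_fst_mul hu hh hC hsupp hA hμA hB hνB)).add
    (integrable_comp_snd_mul hv hh hC hsupp hA hμA hB hνB)

theorem integral_add_add_mul {c : α × β → ℝ} {u : α → ℝ} {v : β → ℝ}
    (hc : IntegrableOn c (A ×ˢ B) (μ.prod ν)) (hu : MemLp u 2 μ) (hv : MemLp v 2 ν)
    (hh : AEStronglyMeasurable h (μ.prod ν)) (hC : ∀ p, |h p| ≤ C) (hsupp : support h ⊆ A ×ˢ B)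
    (hA : MeasurableSet A) (hμA : μ A ≠ ∞) (hB : MeasurableSet B) (hνB : ν B ≠ ∞) :
    ∫ p, (c p + u p.1 + v p.2) * h p ∂(μ.prod ν) = ∫ p, c p * h p ∂(μ.prod ν)
      + ∫ x, u x * ∫ y, h (x, y) ∂ν ∂μ + ∫ y, v y * ∫ x, h (x, y) ∂μ ∂ν := by
  have hch := hc.integrable_mul_of_support_subset hh hC hsupp
  have hu' := integrable_comp_fst_mul hu hh hC hsupp hA hμA hB hνB
  have hv' := integrable_comp_snd_mul hv hh hC hsupp hA hμA hB hνB
  simp_rw [add_mul]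
  rw [integral_add _ hv', integral_add hch hu', integral_comp_fst_mul hu',
    integral_comp_snd_mul hv']
  exact hch.add hu'

end SFinite

end ProductSpace

section RelaxedDuality

variable {m n : ℕ} {ε C : ℝ} {A : Set (Fin m → ℝ)} {B : Set (Fin n → ℝ)}
  {hbar c h k w : (Fin m → ℝ) × (Fin n → ℝ) → ℝ} {f u : (Fin m → ℝ) → ℝ} {g v : (Fin n → ℝ) → ℝ}

theorem relaxedCost_sub_relaxedDual (hε : ε ≠ 0) (hA : IsCompact A) (hB : IsCompact B)
    (hc : LocallyIntegrable c) (hf : MemLp f 2) (hg : MemLp g 2) (hh : Measurable h)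
    (hC : ∀ p, |h p| ≤ C) (hsupp : support h ⊆ A ×ˢ B) (hu : MemLp u 2) (hv : MemLp v 2)
    (hw : Integrable fun p => w p * hbar p) :
    relaxedCost m n ε c f g h - relaxedDual m n ε hbar f g u v w =
      (∫ p, ((c p + u p.1 + v p.2) * h p - w p * hbar p))
        + 1 / (2 * ε) * (∫ x, ((∫ y, h (x, y)) - f x - ε * u x) ^ 2)
        + 1 / (2 * ε) * ∫ y, ((∫ x, h (x, y)) - g y - ε * v y) ^ 2 := by
  have hAm := hA.isClosed.measurableSet
  have hBm := hB.isClosed.measurableSet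
  have hμA : volume A ≠ ∞ := hA.measure_lt_top.ne
  have hνB : volume B ≠ ∞ := hB.measure_lt_top.ne
  have hcAB : IntegrableOn c (A ×ˢ B) := hc.integrableOn_isCompact (hA.prod hB)
  have hh' : AEStronglyMeasurable h (volume.prod volume) := hh.aestronglyMeasurable
  rw [Measure.volume_eq_prod,
    integral_sub (integrable_add_add_mul hcAB hu hv hh' hC hsupp hAm hμA hBm hνB) hw,
    integral_add_add_mul hcAB hu hv hh' hC hsupp hAm hμA hBm hνB]
  have hx := integral_completing_square hε
    (memLp_two_integral_prod_right hh' hC hsupp hAm hμA hBm hνB) hf hu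
  have hy := integral_completing_square hε
    (memLp_two_integral_prod_left hh' hC hsupp hAm hμA hBm hνB) hg hv
  unfold relaxedCost relaxedDual
  rw [Measure.volume_eq_prod]
  linarith

theorem relaxedDual_le_relaxedCost (hε : 0 < ε) (hA : IsCompact A) (hB : IsCompact B)
    (hc : LocallyIntegrable c) (hf : MemLp f 2) (hg : MemLp g 2) (hC : ∀ p, hbar p ≤ C)
    (hsupp : support hbar ⊆ A ×ˢ B) (hh : Measurable h) (h0 : ∀ p, 0 ≤ h p)
    (hle : ∀ p, h p ≤ hbar p) (hu : MemLp u 2) (hv : MemLp v 2)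
    (hw : Integrable fun p => w p * hbar p) (hfeas : ∀ᵐ p, 0 ≤ u p.1 + v p.2 - w p + c p)
    (hw0 : ∀ᵐ p, w p ≤ 0) :
    relaxedDual m n ε hbar f g u v w ≤ relaxedCost m n ε c f g h := by
  obtain ⟨hhC, hhsupp⟩ := abs_le_and_support_subset_of_nonneg_of_le h0 hle hC hsupp
  rw [← sub_nonneg, relaxedCost_sub_relaxedDual hε.ne' hA hB hc hf hg hh hhC hhsupp hu hv hw]
  have hI : 0 ≤ ∫ p, ((c p + u p.1 + v p.2) * h p - w p * hbar p) := by
    refine integral_nonneg_of_ae ?_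
    filter_upwards [hfeas, hw0] with p hp hwp
    show 0 ≤ _
    nlinarith [mul_nonneg hp (h0 p), mul_nonneg (neg_nonneg.2 hwp) (sub_nonneg.2 (hle p))]
  have hε' : 0 ≤ 1 / (2 * ε) := by positivity
  exact add_nonneg (add_nonneg hI (mul_nonneg hε' (integral_nonneg fun _ => sq_nonneg _)))
    (mul_nonneg hε' (integral_nonneg fun _ => sq_nonneg _))

theorem relaxedCost_segment_sub_relaxedDual (hε : ε ≠ 0) (hA : IsCompact A) (hB : IsCompact B)
    (hc : LocallyIntegrable c) (hf : MemLp f 2) (hg : MemLp g 2) (hC : ∀ p, hbar p ≤ C)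
    (hsupp : support hbar ⊆ A ×ˢ B) (hh : Measurable h) (h0 : ∀ p, 0 ≤ h p)
    (hle : ∀ p, h p ≤ hbar p) (hk : Measurable k) (k0 : ∀ p, 0 ≤ k p) (kle : ∀ p, k p ≤ hbar p)
    (hu : MemLp u 2) (hv : MemLp v 2) (hu_def : ∀ x, u x = 1 / ε * ((∫ y, h (x, y)) - f x))
    (hv_def : ∀ y, v y = 1 / ε * ((∫ x, h (x, y)) - g y)) (hw : Integrable fun p => w p * hbar p)
    (hwk : ∀ᵐ p, (c p + u p.1 + v p.2) * k p = w p * hbar p) {t : ℝ} (ht0 : 0 ≤ t) (ht1 : t ≤ 1) :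
    relaxedCost m n ε c f g (fun p => h p + t * (k p - h p)) - relaxedDual m n ε hbar f g u v w
      = (1 - t) * (relaxedCost m n ε c f g h - relaxedDual m n ε hbar f g u v w)
        + t ^ 2 * (1 / (2 * ε) * ((∫ x, ((∫ y, k (x, y)) - ∫ y, h (x, y)) ^ 2)
          + ∫ y, ((∫ x, k (x, y)) - ∫ x, h (x, y)) ^ 2)) := by
  have hAm := hA.isClosed.measurableSet
  have hBm := hB.isClosed.measurableSet
  have hμA : volume A ≠ ∞ := hA.measure_lt_top.ne
  have hνB : volume B ≠ ∞ := hB.measure_lt_top.ne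
  obtain ⟨hhC, hhsupp⟩ := abs_le_and_support_subset_of_nonneg_of_le h0 hle hC hsupp
  obtain ⟨hkC, hksupp⟩ := abs_le_and_support_subset_of_nonneg_of_le k0 kle hC hsupp
  obtain ⟨htC, htsupp⟩ := abs_le_and_support_subset_of_nonneg_of_le
    (h := fun p => h p + t * (k p - h p)) (fun p => by nlinarith [h0 p, k0 p])
    (fun p => by nlinarith [hle p, kle p]) hC hsupp
  have hx : ∀ x, (∫ y, (h (x, y) + t * (k (x, y) - h (x, y)))) - f x - ε * u x
      = t * ((∫ y, k (x, y)) - ∫ y, h (x, y)) := fun x => by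
    rw [integral_add_mul_sub (integrable_prodMk_left_of_support_subset hh hhC hhsupp hBm hνB x)
      (integrable_prodMk_left_of_support_subset hk hkC hksupp hBm hνB x), hu_def]
    field_simp
    ring
  have hy : ∀ y, (∫ x, (h (x, y) + t * (k (x, y) - h (x, y)))) - g y - ε * v y
      = t * ((∫ x, k (x, y)) - ∫ x, h (x, y)) := fun y => by
    rw [integral_add_mul_sub (integrable_prodMk_right_of_support_subset hh hhC hhsupp hAm hμA y)
      (integrable_prodMk_right_of_support_subset hk hkC hksupp hAm hμA y), hv_def]
    field_simp
    ring
  have hI : ∫ p, ((c p + u p.1 + v p.2) * (h p + t * (k p - h p)) - w p * hbar p)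
      = (1 - t) * ∫ p, ((c p + u p.1 + v p.2) * h p - w p * hbar p) := by
    rw [← integral_const_mul]
    refine integral_congr_ae (hwk.mono fun p hp => ?_)
    linear_combination t * hp
  have hht : Measurable fun p => h p + t * (k p - h p) := hh.add ((hk.sub hh).const_mul t)
  rw [relaxedCost_sub_relaxedDual hε hA hB hc hf hg hht htC htsupp hu hv hw,
    relaxedCost_sub_relaxedDual hε hA hB hc hf hg hh hhC hhsupp hu hv hw, hI]
  have hx0 : ∀ x, (∫ y, h (x, y)) - f x - ε * u x = 0 := fun x => by
    rw [hu_def]; field_simp; ring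
  have hy0 : ∀ y, (∫ x, h (x, y)) - g y - ε * v y = 0 := fun y => by
    rw [hv_def]; field_simp; ring
  simp_rw [hx, hy, hx0, hy0, mul_pow, integral_const_mul]
  simp only [zero_pow two_ne_zero, integral_zero, mul_zero]
  ring

theorem relaxedCost_eq_relaxedDual_of_forall_le (hε : 0 < ε) (hA : IsCompact A) (hB : IsCompact B)
    (hbar_meas : Measurable hbar) (hbar_nonneg : ∀ p, 0 ≤ hbar p) (hC : ∀ p, hbar p ≤ C)
    (hsupp : support hbar ⊆ A ×ˢ B) (hc : LocallyIntegrable c) (hf : MemLp f 2) (hg : MemLp g 2)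
    (hh : Measurable h) (h0 : ∀ p, 0 ≤ h p) (hle : ∀ p, h p ≤ hbar p)
    (hmin : ∀ k, Measurable k → (∀ p, 0 ≤ k p ∧ k p ≤ hbar p) →
      relaxedCost m n ε c f g h ≤ relaxedCost m n ε c f g k)
    (hu_def : ∀ x, u x = 1 / ε * ((∫ y, h (x, y)) - f x))
    (hv_def : ∀ y, v y = 1 / ε * ((∫ x, h (x, y)) - g y))
    (hw_def : ∀ p, w p = min (c p + u p.1 + v p.2) 0) :
    relaxedCost m n ε c f g h = relaxedDual m n ε hbar f g u v w := by
  have hAm := hA.isClosed.measurableSet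
  have hBm := hB.isClosed.measurableSet
  have hμA : volume A ≠ ∞ := hA.measure_lt_top.ne
  have hνB : volume B ≠ ∞ := hB.measure_lt_top.ne
  obtain ⟨hhC, hhsupp⟩ := abs_le_and_support_subset_of_nonneg_of_le h0 hle hC hsupp
  have hh' : AEStronglyMeasurable h (volume.prod volume) := hh.aestronglyMeasurable
  have hu : MemLp u 2 := by
    rw [show u = _ from funext hu_def]
    exact ((memLp_two_integral_prod_right hh' hhC hhsupp hAm hμA hBm hνB).sub hf).const_mul _
  have hv : MemLp v 2 := by
    rw [show v = _ from funext hv_def]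
    exact ((memLp_two_integral_prod_left hh' hhC hhsupp hAm hμA hBm hνB).sub hg).const_mul _
  obtain ⟨k, hk, hk_bounds, hφk⟩ := exists_measurable_mul_ae_eq_min_zero_mul (μ := volume)
    ((hc.aestronglyMeasurable.add hu.1.comp_fst).add hv.1.comp_snd) hbar_meas hbar_nonneg
  have hwk : ∀ᵐ p, (c p + u p.1 + v p.2) * k p = w p * hbar p :=
    hφk.mono fun p hp => by rw [hw_def]; exact hp
  obtain ⟨hkC, hksupp⟩ := abs_le_and_support_subset_of_nonneg_of_le
    (fun p => (hk_bounds p).1) (fun p => (hk_bounds p).2) hC hsupp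
  have hw : Integrable fun p => w p * hbar p :=
    (integrable_add_add_mul (hc.integrableOn_isCompact (hA.prod hB)) hu hv hk.aestronglyMeasurable
      hkC hksupp hAm hμA hBm hνB).congr hwk
  have hgap_nonneg := relaxedDual_le_relaxedCost hε hA hB hc hf hg hC hsupp hh h0 hle hu hv hw
    (Eventually.of_forall fun p => by linarith [hw_def p ▸ min_le_left (c p + u p.1 + v p.2) 0])
    (Eventually.of_forall fun p => hw_def p ▸ min_le_right _ _)
  have hsegment : ∀ t : ℝ, 0 < t → t ≤ 1 →
      relaxedCost m n ε c f g h ≤ relaxedCost m n ε c f g (fun p => h p + t * (k p - h p)) :=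
    fun t ht0 ht1 => hmin _ (hh.add ((hk.sub hh).const_mul t)) fun p => by
      constructor <;> nlinarith [h0 p, hle p, hk_bounds p]
  have hgap_nonpos : relaxedCost m n ε c f g h - relaxedDual m n ε hbar f g u v w ≤ 0 :=
    nonpos_of_forall_le_one_sub_mul_add_sq_mul fun t ht0 ht1 =>
      (sub_le_sub_right (hsegment t ht0 ht1) _).trans_eq <|
        relaxedCost_segment_sub_relaxedDual hε.ne' hA hB hc hf hg hC hsupp hh h0 hle hk
          (fun p => (hk_bounds p).1) (fun p => (hk_bounds p).2) hu hv hu_def hv_def hw hwk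
          ht0.le ht1
  linarith

end RelaxedDuality

theorem relaxed_strong_duality_general (m n : ℕ) (ε : ℝ) (hε : 0 < ε)
    (hbar c : (Fin m → ℝ) × (Fin n → ℝ) → ℝ)
    (f : (Fin m → ℝ) → ℝ) (g : (Fin n → ℝ) → ℝ)
    (hbar_meas : Measurable hbar) (hbar_nonneg : ∀ p, 0 ≤ hbar p)
    (hbar_bdd : ∃ C, ∀ p, hbar p ≤ C) (hbar_supp : HasCompactSupport hbar)
    (f_meas : Measurable f)
    (f_sq_int : Integrable (fun x => (f x) ^ 2))
    (g_meas : Measurable g)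
    (g_sq_int : Integrable (fun y => (g y) ^ 2))
    (c_locint : LocallyIntegrable c)
    (Wε : Set ((Fin m → ℝ) × (Fin n → ℝ))) (Wε_meas : MeasurableSet Wε)
    (hepsfn : (Fin m → ℝ) × (Fin n → ℝ) → ℝ)
    (heps_def : hepsfn = Wε.indicator hbar)
    (heps_min : ∀ h : (Fin m → ℝ) × (Fin n → ℝ) → ℝ, Measurable h →
      (∀ᵐ p, 0 ≤ h p ∧ h p ≤ hbar p) →
      relaxedCost m n ε c f g hepsfn ≤ relaxedCost m n ε c f g h)
    (uε : (Fin m → ℝ) → ℝ) (vε : (Fin n → ℝ) → ℝ)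
    (wε : (Fin m → ℝ) × (Fin n → ℝ) → ℝ)
    (uε_def : ∀ x, uε x = (1 / ε) * ((∫ y, hepsfn (x, y)) - f x))
    (vε_def : ∀ y, vε y = (1 / ε) * ((∫ x, hepsfn (x, y)) - g y))
    (wε_def : ∀ p, wε p = min (c p + uε p.1 + vε p.2) 0) :
    relaxedCost m n ε c f g hepsfn = relaxedDual m n ε hbar f g uε vε wε ∧
      ∀ (u : (Fin m → ℝ) → ℝ) (v : (Fin n → ℝ) → ℝ)
        (w : (Fin m → ℝ) × (Fin n → ℝ) → ℝ),
        Measurable u → Measurable v → Measurable w →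
        Integrable (fun x => (u x) ^ 2) → Integrable (fun y => (v y) ^ 2) →
        Integrable (fun x => u x * f x) → Integrable (fun y => v y * g y) →
        Integrable (fun p => w p * hbar p) →
        (∀ᵐ p : (Fin m → ℝ) × (Fin n → ℝ), 0 ≤ u p.1 + v p.2 - w p + c p) →
        (∀ᵐ p : (Fin m → ℝ) × (Fin n → ℝ), w p ≤ 0) →
        relaxedDual m n ε hbar f g u v w ≤ relaxedDual m n ε hbar f g uε vε wε := by
  obtain ⟨C, hC⟩ := hbar_bdd
  have hA := hbar_supp.image continuous_fst
  have hB := hbar_supp.image continuous_snd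
  have hsupp := (subset_tsupport hbar).trans subset_fst_image_prod_snd_image
  have hf := (memLp_two_iff_integrable_sq f_meas.aestronglyMeasurable).2 f_sq_int
  have hg := (memLp_two_iff_integrable_sq g_meas.aestronglyMeasurable).2 g_sq_int
  subst heps_def
  have heps0 : ∀ p, 0 ≤ Wε.indicator hbar p := indicator_nonneg fun p _ => hbar_nonneg p
  have heps_le : ∀ p, Wε.indicator hbar p ≤ hbar p := indicator_le_self' fun p _ => hbar_nonneg p
  have heps_meas := hbar_meas.indicator Wε_meas
  have hstrong := relaxedCost_eq_relaxedDual_of_forall_le hε hA hB hbar_meas hbar_nonneg hC hsupp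
    c_locint hf hg heps_meas heps0 heps_le
    (fun k hk hk_bounds => heps_min k hk (Eventually.of_forall hk_bounds)) uε_def vε_def wε_def
  refine ⟨hstrong, fun u v w u_meas v_meas _ u_sq_int v_sq_int _ _ hw hfeas hw0 => ?_⟩
  rw [← hstrong]
  exact relaxedDual_le_relaxedCost hε hA hB c_locint hf hg hC hsupp heps_meas heps0 heps_le
    ((memLp_two_iff_integrable_sq u_meas.aestronglyMeasurable).2 u_sq_int)
    ((memLp_two_iff_integrable_sq v_meas.aestronglyMeasurable).2 v_sq_int) hw hfeas hw0

/-- Strong duality for the relaxed problem: if `h_ε = h̄ χ_{W_ε}` minimizes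
`Iᶜ_ε` over `{h : 0 ≤ h ≤ h̄}` and `u_ε = (1/ε)(⟨h_ε⟩ₓ − f)`, `v_ε = (1/ε)(⟨h_ε⟩_y − g)`,
`w_ε = min{c + u_ε + v_ε, 0}`, then `Iᶜ_ε(h_ε) = Jᵉ(u_ε,v_ε,w_ε)` and `(u_ε,v_ε,w_ε)`
maximizes `Jᵉ` over all dual-feasible triples. -/
theorem relaxed_strong_duality (m n : ℕ) (ε : ℝ) (hε : 0 < ε)
    (hbar c : (Fin m → ℝ) × (Fin n → ℝ) → ℝ)
    (f : (Fin m → ℝ) → ℝ) (g : (Fin n → ℝ) → ℝ)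
    (hbar_meas : Measurable hbar) (hbar_nonneg : ∀ p, 0 ≤ hbar p)
    (hbar_bdd : ∃ C, ∀ p, hbar p ≤ C) (hbar_supp : HasCompactSupport hbar)
    (f_meas : Measurable f) (f_nonneg : ∀ x, 0 ≤ f x)
    (f_int : Integrable f) (f_mass : ∫ x, f x = 1)
    (f_sq_int : Integrable (fun x => (f x) ^ 2))
    (g_meas : Measurable g) (g_nonneg : ∀ y, 0 ≤ g y)
    (g_int : Integrable g) (g_mass : ∫ y, g y = 1)
    (g_sq_int : Integrable (fun y => (g y) ^ 2))
    (c_locint : LocallyIntegrable c)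
    (Γne : ∃ h0 : (Fin m → ℝ) × (Fin n → ℝ) → ℝ, Measurable h0 ∧
      (∀ᵐ p, 0 ≤ h0 p ∧ h0 p ≤ hbar p) ∧
      (∀ᵐ x, (∫ y, h0 (x, y)) = f x) ∧ (∀ᵐ y, (∫ x, h0 (x, y)) = g y))
    (Wε : Set ((Fin m → ℝ) × (Fin n → ℝ))) (Wε_meas : MeasurableSet Wε)
    (Wε_sub : Wε ⊆ tsupport hbar)
    (hepsfn : (Fin m → ℝ) × (Fin n → ℝ) → ℝ)
    (heps_def : hepsfn = Wε.indicator hbar)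
    (heps_min : ∀ h : (Fin m → ℝ) × (Fin n → ℝ) → ℝ, Measurable h →
      (∀ᵐ p, 0 ≤ h p ∧ h p ≤ hbar p) →
      relaxedCost m n ε c f g hepsfn ≤ relaxedCost m n ε c f g h)
    (uε : (Fin m → ℝ) → ℝ) (vε : (Fin n → ℝ) → ℝ)
    (wε : (Fin m → ℝ) × (Fin n → ℝ) → ℝ)
    (uε_def : ∀ x, uε x = (1 / ε) * ((∫ y, hepsfn (x, y)) - f x))
    (vε_def : ∀ y, vε y = (1 / ε) * ((∫ x, hepsfn (x, y)) - g y))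
    (wε_def : ∀ p, wε p = min (c p + uε p.1 + vε p.2) 0) :
    relaxedCost m n ε c f g hepsfn = relaxedDual m n ε hbar f g uε vε wε ∧
      ∀ (u : (Fin m → ℝ) → ℝ) (v : (Fin n → ℝ) → ℝ)
        (w : (Fin m → ℝ) × (Fin n → ℝ) → ℝ),
        Measurable u → Measurable v → Measurable w →
        Integrable (fun x => (u x) ^ 2) → Integrable (fun y => (v y) ^ 2) →
        Integrable (fun x => u x * f x) → Integrable (fun y => v y * g y) →
        Integrable (fun p => w p * hbar p) →
        (∀ᵐ p : (Fin m → ℝ) × (Fin n → ℝ), 0 ≤ u p.1 + v p.2 - w p + c p) →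
        (∀ᵐ p : (Fin m → ℝ) × (Fin n → ℝ), w p ≤ 0) →
        relaxedDual m n ε hbar f g u v w ≤ relaxedDual m n ε hbar f g uε vε wε :=
  relaxed_strong_duality_general m n ε hε hbar c f g hbar_meas hbar_nonneg hbar_bdd hbar_supp f_meas
    f_sq_int g_meas g_sq_int c_locint Wε Wε_meas hepsfn heps_def heps_min uε vε wε uε_def vε_def
    wε_def
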